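/- Let X ⊆ ℝⁿ be open with 0 ∈ X, K : X → ℝ smooth with positive definite Hessian ∇²K(x) for all x, and suppose ∇K : X → Z is a bijection onto an open set Z with smooth inverse φ. Define K*(z) := zᵀφ(z) − K(φ(z)) and the storage function S(x) := K*(∇K(x)). Let V : X × ℝᵐ → ℝ be smooth and satisfy xᵀ ∂V/∂x(x,u) − uᵀ ∂V/∂u(x,u) ≥ 0 for all (x,u). Then along any differentiable curve x : I → X and functions u, y : I → ℝᵐ satisfying the relaxation-system equations ∇²K(x(t)) ẋ(t) = −∂V/∂x(x(t),u(t)) and y(t) = −∂V/∂u(x(t),u(t)), the dissipation inequality d/dt S(x(t)) ≤ u(t)ᵀ y(t) holds for all t ∈ I; moreover S(x) ≥ S(0) for all x ∈ X (so S is a storage function bounded from below), provided the segment from ∇K(0) to any point of Z lies in Z. -/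

import Mathlib

open Matrix

/-- The gradient (vector of partial derivatives) of `f : ℝⁿ → ℝ`. -/
noncomputable def gradVec {n : ℕ} (f : (Fin n → ℝ) → ℝ) (x : Fin n → ℝ) : Fin n → ℝ :=
  fun i => fderiv ℝ f x (Pi.single i 1)

/-- The Hessian matrix of `f : ℝⁿ → ℝ`. -/
noncomputable def hessMat {n : ℕ} (f : (Fin n → ℝ) → ℝ) (x : Fin n → ℝ) :
    Matrix (Fin n) (Fin n) ℝ :=
  Matrix.of fun i j => fderiv ℝ (fun x' => fderiv ℝ f x' (Pi.single j 1)) x (Pi.single i 1)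

/-- The Legendre transform `K*(z) = zᵀ φ(z) − K(φ(z))`, where `φ` is the inverse of `∇K`. -/
noncomputable def legendre {n : ℕ} (K : (Fin n → ℝ) → ℝ) (φ : (Fin n → ℝ) → (Fin n → ℝ))
    (z : Fin n → ℝ) : ℝ :=
  z ⬝ᵥ φ z - K (φ z)

lemma fderiv_eq_dot {n : ℕ} (f : (Fin n → ℝ) → ℝ) (x v : Fin n → ℝ) :
    fderiv ℝ f x v = gradVec f x ⬝ᵥ v := by
  have := LinearMap.pi_apply_eq_sum_univ ((fderiv ℝ f x).toLinearMap) v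
  simp only [ContinuousLinearMap.coe_coe] at this
  rw [this, dotProduct]
  refine Finset.sum_congr rfl fun i _ => ?_
  rw [smul_eq_mul, mul_comm]
  congr 2
  ext j
  simp [Pi.single_apply, eq_comm]

lemma gradComp_diffAt {n : ℕ} {X : Set (Fin n → ℝ)} (hXopen : IsOpen X)
    {K : (Fin n → ℝ) → ℝ} (hK : ContDiffOn ℝ (⊤ : ℕ∞) K X) {x : Fin n → ℝ} (hx : x ∈ X) (j : Fin n) :
    DifferentiableAt ℝ (fun x' => fderiv ℝ K x' (Pi.single j 1)) x := by
  have h1 : ContDiffOn ℝ (⊤ : ℕ∞) (fderiv ℝ K) X := hK.fderiv_of_isOpen hXopen (by simp)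
  have h2 : ContDiffOn ℝ (⊤ : ℕ∞) (fun x' => fderiv ℝ K x' (Pi.single j 1)) X :=
    h1.clm_apply contDiffOn_const
  exact (h2.differentiableOn (by simp) x hx).differentiableAt (hXopen.mem_nhds hx)

lemma hasDerivAt_gradVec_comp {n : ℕ} {X : Set (Fin n → ℝ)} (hXopen : IsOpen X)
    {K : (Fin n → ℝ) → ℝ} (hK : ContDiffOn ℝ (⊤ : ℕ∞) K X) {c : ℝ → Fin n → ℝ} {c' : Fin n → ℝ}
    {t : ℝ} (hc : HasDerivAt c c' t) (hct : c t ∈ X) :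
    HasDerivAt (fun s => gradVec K (c s)) ((hessMat K (c t))ᵀ *ᵥ c') t := by
  rw [hasDerivAt_pi]
  intro j
  have hd := gradComp_diffAt hXopen hK hct j
  have := (hd.hasFDerivAt.comp_hasDerivAt t hc)
  convert this using 1
  · funext s; rfl
  rw [fderiv_eq_dot]
  simp only [mulVec, dotProduct, transpose_apply, hessMat, Matrix.of_apply, gradVec]

lemma hasDerivAt_K_comp {n : ℕ} {X : Set (Fin n → ℝ)} (hXopen : IsOpen X)
    {K : (Fin n → ℝ) → ℝ} (hK : ContDiffOn ℝ (⊤ : ℕ∞) K X) {c : ℝ → Fin n → ℝ} {c' : Fin n → ℝ}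
    {t : ℝ} (hc : HasDerivAt c c' t) (hct : c t ∈ X) :
    HasDerivAt (fun s => K (c s)) (gradVec K (c t) ⬝ᵥ c') t := by
  have hd : DifferentiableAt ℝ K (c t) :=
    ((hK.differentiableOn (by simp)) (c t) hct).differentiableAt (hXopen.mem_nhds hct)
  have := hd.hasFDerivAt.comp_hasDerivAt t hc
  rwa [fderiv_eq_dot] at this

lemma hasDerivAt_dotProduct {n : ℕ} {a b : ℝ → Fin n → ℝ} {a' b' : Fin n → ℝ} {t : ℝ}
    (ha : HasDerivAt a a' t) (hb : HasDerivAt b b' t) :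
    HasDerivAt (fun s => a s ⬝ᵥ b s) (a' ⬝ᵥ b t + a t ⬝ᵥ b') t := by
  simp only [dotProduct]
  rw [← Finset.sum_add_distrib]
  exact HasDerivAt.fun_sum fun i _ => (hasDerivAt_pi.1 ha i).mul (hasDerivAt_pi.1 hb i)

/-- A nonlinear relaxation system (gradient system with Hessian Riemannian metric
`∇²K > 0` whose potential `V` satisfies `xᵀ∂V/∂x − uᵀ∂V/∂u ≥ 0`) is passive with storage
function `S(x) := K*(∇K(x))`: along all solutions `d/dt S(x(t)) ≤ u(t)ᵀy(t)`, and moreover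
`S(x) ≥ S(0)` for all `x ∈ X` (provided the segment from `∇K(0)` to any point of `Z`
lies in `Z`). -/
theorem relaxation_system_passive {n m : ℕ}
    (X Z : Set (Fin n → ℝ)) (hXopen : IsOpen X) (hZopen : IsOpen Z)
    (hX0 : (0 : Fin n → ℝ) ∈ X)
    (K : (Fin n → ℝ) → ℝ) (hK : ContDiffOn ℝ (⊤ : ℕ∞) K X)
    (hHessPD : ∀ x ∈ X, (hessMat K x).PosDef)
    (φ : (Fin n → ℝ) → (Fin n → ℝ)) (hφ : ContDiffOn ℝ (⊤ : ℕ∞) φ Z)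
    (hbij : Set.BijOn (gradVec K) X Z)
    (hinv₁ : ∀ x ∈ X, φ (gradVec K x) = x) (hinv₂ : ∀ z ∈ Z, gradVec K (φ z) = z)
    (hseg : ∀ z ∈ Z, segment ℝ (gradVec K 0) z ⊆ Z)
    (V : (Fin n → ℝ) → (Fin m → ℝ) → ℝ)
    (hV : ContDiffOn ℝ (⊤ : ℕ∞) (fun p : (Fin n → ℝ) × (Fin m → ℝ) => V p.1 p.2) (X ×ˢ Set.univ))
    (hrelax : ∀ x ∈ X, ∀ u : Fin m → ℝ,
      0 ≤ x ⬝ᵥ gradVec (fun x' => V x' u) x - u ⬝ᵥ gradVec (fun u' => V x u') u)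
    (I : Set ℝ) (x : ℝ → Fin n → ℝ) (dx : ℝ → Fin n → ℝ) (u y : ℝ → Fin m → ℝ)
    (hxX : ∀ t ∈ I, x t ∈ X)
    (hx : ∀ t ∈ I, HasDerivAt x (dx t) t)
    (hgrad : ∀ t ∈ I, (hessMat K (x t)) *ᵥ dx t = -(gradVec (fun x' => V x' (u t)) (x t)))
    (hout : ∀ t ∈ I, y t = -(gradVec (fun u' => V (x t) u') (u t))) :
    (∀ t ∈ I, deriv (fun s => legendre K φ (gradVec K (x s))) t ≤ u t ⬝ᵥ y t) ∧
    (∀ x₀ ∈ X, legendre K φ (gradVec K 0) ≤ legendre K φ (gradVec K x₀)) := by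
  constructor
  · intro t ht
    have hxt := hxX t ht
    have hxc : HasDerivAt x (dx t) t := hx t ht
    have hmem : ∀ᶠ s in nhds t, x s ∈ X :=
      hxc.continuousAt.preimage_mem_nhds (hXopen.mem_nhds hxt)
    have heq : (fun s => legendre K φ (gradVec K (x s))) =ᶠ[nhds t]
        (fun s => gradVec K (x s) ⬝ᵥ x s - K (x s)) := by
      filter_upwards [hmem] with s hs
      simp [legendre, hinv₁ _ hs]
    have hg := hasDerivAt_gradVec_comp hXopen hK hxc hxt
    have hF := (hasDerivAt_dotProduct hg hxc).sub (hasDerivAt_K_comp hXopen hK hxc hxt)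
    have hderiv : deriv (fun s => legendre K φ (gradVec K (x s))) t =
        ((hessMat K (x t))ᵀ *ᵥ dx t) ⬝ᵥ x t := by
      rw [heq.deriv_eq, HasDerivAt.deriv (f := fun s => gradVec K (x s) ⬝ᵥ x s - K (x s)) hF]; ring
    have hsym : (hessMat K (x t))ᵀ = hessMat K (x t) := by
      have h := (hHessPD _ hxt).1
      rwa [Matrix.IsHermitian, conjTranspose_eq_transpose_of_trivial] at h
    rw [hderiv, hsym, hgrad t ht, hout t ht]
    have hr := hrelax (x t) hxt (u t)
    have h1 : gradVec (fun x' => V x' (u t)) (x t) ⬝ᵥ x t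
        = x t ⬝ᵥ gradVec (fun x' => V x' (u t)) (x t) := dotProduct_comm _ _
    simp only [neg_dotProduct, dotProduct_neg]
    linarith
  · intro x₀ hx₀
    set z₀ := gradVec K 0 with hz₀def
    set z := gradVec K x₀ with hzdef
    have hz₀Z : z₀ ∈ Z := hbij.mapsTo hX0
    have hzZ : z ∈ Z := hbij.mapsTo hx₀
    set w := z - z₀ with hwdef
    set c : ℝ → Fin n → ℝ := fun s => z₀ + s • w with hcdef
    have hccont : Continuous c := by
      apply continuous_const.add
      exact continuous_id.smul continuous_const
    have hcZ : ∀ s ∈ Set.Icc (0:ℝ) 1, c s ∈ Z := by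
      intro s hs
      apply hseg z hzZ
      rw [segment_eq_image']
      exact ⟨s, hs, rfl⟩
    set U := c ⁻¹' Z with hUdef
    have hUopen : IsOpen U := hZopen.preimage hccont
    have hIccU : Set.Icc (0:ℝ) 1 ⊆ U := hcZ
    have hφX : ∀ z' ∈ Z, φ z' ∈ X := by
      intro z' hz'
      obtain ⟨x', hx', rfl⟩ := hbij.surjOn hz'
      rw [hinv₁ _ hx']; exact hx'
    have hcderiv : ∀ s : ℝ, HasDerivAt c w s := by
      intro s
      have : HasDerivAt (fun s : ℝ => s • w) ((1:ℝ) • w) s :=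
        (hasDerivAt_id s).smul_const w
      have h2 := this.const_add z₀; rw [one_smul] at h2; exact h2
    set p : ℝ → Fin n → ℝ := fun s => φ (c s) with hpdef
    set p' : ℝ → Fin n → ℝ := fun s => fderiv ℝ φ (c s) w with hp'def
    have hpderiv : ∀ s ∈ U, HasDerivAt p (p' s) s := by
      intro s hs
      have hd : DifferentiableAt ℝ φ (c s) :=
        ((hφ.differentiableOn (by simp)) (c s) hs).differentiableAt (hZopen.mem_nhds hs)
      exact hd.hasFDerivAt.comp_hasDerivAt s (hcderiv s)
    have hpX : ∀ s ∈ U, p s ∈ X := fun s hs => hφX _ hs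
    have hgradp : ∀ s ∈ U, gradVec K (p s) = c s := fun s hs => hinv₂ _ hs
    -- key: hessMat K (p s) *ᵥ p' s = w for s ∈ U
    have hkey : ∀ s ∈ U, (hessMat K (p s))ᵀ *ᵥ p' s = w := by
      intro s hs
      have h1 : HasDerivAt (fun s' => gradVec K (p s')) ((hessMat K (p s))ᵀ *ᵥ p' s) s :=
        hasDerivAt_gradVec_comp hXopen hK (hpderiv s hs) (hpX s hs)
      have heq : (fun s' => gradVec K (p s')) =ᶠ[nhds s] c := by
        filter_upwards [hUopen.mem_nhds hs] with s' hs'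
        exact hgradp s' hs'
      have h2 : HasDerivAt c ((hessMat K (p s))ᵀ *ᵥ p' s) s :=
        h1.congr_of_eventuallyEq heq.symm
      exact h2.unique (hcderiv s)
    have hsymm : ∀ s ∈ U, (hessMat K (p s))ᵀ = hessMat K (p s) := by
      intro s hs
      have h := (hHessPD _ (hpX s hs)).1
      rwa [Matrix.IsHermitian, conjTranspose_eq_transpose_of_trivial] at h
    have hwp'_nonneg : ∀ s ∈ U, 0 ≤ w ⬝ᵥ p' s := by
      intro s hs
      have : w ⬝ᵥ p' s = p' s ⬝ᵥ (hessMat K (p s) *ᵥ p' s) := by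
        rw [← hsymm s hs, hkey s hs, dotProduct_comm]
      rw [this]
      have := (hHessPD _ (hpX s hs)).posSemidef.dotProduct_mulVec_nonneg (p' s)
      simpa using this
    set q : ℝ → ℝ := fun s => w ⬝ᵥ p s with hqdef
    have hqderiv : ∀ s ∈ U, HasDerivAt q (w ⬝ᵥ p' s) s := by
      intro s hs
      have := hasDerivAt_dotProduct (hasDerivAt_const s w) (hpderiv s hs)
      simpa using this
    set h : ℝ → ℝ := fun s => legendre K φ (c s) with hhdef
    have hhderiv : ∀ s ∈ U, HasDerivAt h (q s) s := by
      intro s hs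
      have h1 := hasDerivAt_dotProduct (hcderiv s) (hpderiv s hs)
      have h2 := hasDerivAt_K_comp hXopen hK (hpderiv s hs) (hpX s hs)
      have h3 := h1.sub h2
      rw [hgradp s hs] at h3
      have : w ⬝ᵥ p s + c s ⬝ᵥ p' s - c s ⬝ᵥ p' s = q s := by ring_nf; rfl
      rw [this] at h3
      exact h3
    have hq0 : q 0 = 0 := by
      have hc0 : c 0 = z₀ := by simp [hcdef]
      have hp0 : p 0 = 0 := by
        rw [hpdef]
        simp only [hc0, hz₀def]
        exact hinv₁ 0 hX0
      simp [hqdef, hp0]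
    have hqmono : MonotoneOn q (Set.Icc 0 1) := by
      apply monotoneOn_of_deriv_nonneg (convex_Icc 0 1)
      · exact fun s hs => ((hqderiv s (hIccU hs)).continuousAt).continuousWithinAt
      · intro s hs
        rw [interior_Icc] at hs
        exact ((hqderiv s (hIccU (Set.mem_Icc_of_Ioo hs))).differentiableAt).differentiableWithinAt
      · intro s hs
        rw [interior_Icc] at hs
        have hsU := hIccU (Set.mem_Icc_of_Ioo hs)
        rw [(hqderiv s hsU).deriv]
        exact hwp'_nonneg s hsU
    have hqnonneg : ∀ s ∈ Set.Icc (0:ℝ) 1, 0 ≤ q s := by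
      intro s hs
      have := hqmono (Set.left_mem_Icc.mpr zero_le_one) hs hs.1
      rw [hq0] at this
      exact this
    have hhmono : MonotoneOn h (Set.Icc 0 1) := by
      apply monotoneOn_of_deriv_nonneg (convex_Icc 0 1)
      · exact fun s hs => ((hhderiv s (hIccU hs)).continuousAt).continuousWithinAt
      · intro s hs
        rw [interior_Icc] at hs
        exact ((hhderiv s (hIccU (Set.mem_Icc_of_Ioo hs))).differentiableAt).differentiableWithinAt
      · intro s hs
        rw [interior_Icc] at hs
        rw [(hhderiv s (hIccU (Set.mem_Icc_of_Ioo hs))).deriv]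
        exact hqnonneg s (Set.mem_Icc_of_Ioo hs)
    have h01 := hhmono (Set.left_mem_Icc.mpr zero_le_one) (Set.right_mem_Icc.mpr zero_le_one)
      zero_le_one
    have hc0 : c 0 = z₀ := by simp [hcdef]
    have hc1 : c 1 = z := by simp [hcdef, hwdef]
    rw [hhdef] at h01
    simp only [hc0, hc1] at h01
    exact h01
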